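/- On ℝ³, let L = X² + Y² − 2D be the Ornstein–Uhlenbeck operator on the Heisenberg group, with X = ∂_x − (y/2)∂_z, Y = ∂_y + (x/2)∂_z, Z = ∂_z, D = (x/2)∂_x + (y/2)∂_y + z∂_z. Let Γ(f) = (Xf)² + (Yf)², Γ^Z(f) = (Zf)², and let Γ₂, Γ₂^Z be the corresponding iterated operators with respect to L. Then for every smooth f: ℝ³ → ℝ and every ε > 0: Γ₂(f) + ε Γ₂^Z(f) ≥ (1 − 1/ε) Γ(f) + (2ε + 1/2)(Zf)². -/

import Mathlib

set_option linter.unreachableTactic false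
set_option linter.unusedTactic false

open MeasureTheory

noncomputable def px (f : ℝ × ℝ × ℝ → ℝ) (p : ℝ × ℝ × ℝ) : ℝ := fderiv ℝ f p (1, 0, 0)
noncomputable def py (f : ℝ × ℝ × ℝ → ℝ) (p : ℝ × ℝ × ℝ) : ℝ := fderiv ℝ f p (0, 1, 0)
noncomputable def pz (f : ℝ × ℝ × ℝ → ℝ) (p : ℝ × ℝ × ℝ) : ℝ := fderiv ℝ f p (0, 0, 1)

/-- X = ∂_x − (y/2)∂_z -/
noncomputable def Xv (f : ℝ × ℝ × ℝ → ℝ) (p : ℝ × ℝ × ℝ) : ℝ := px f p - p.2.1 / 2 * pz f p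
/-- Y = ∂_y + (x/2)∂_z -/
noncomputable def Yv (f : ℝ × ℝ × ℝ → ℝ) (p : ℝ × ℝ × ℝ) : ℝ := py f p + p.1 / 2 * pz f p
/-- Z = ∂_z -/
noncomputable def Zv (f : ℝ × ℝ × ℝ → ℝ) (p : ℝ × ℝ × ℝ) : ℝ := pz f p
/-- dilation vector field D = (x/2)∂_x + (y/2)∂_y + z∂_z -/
noncomputable def Dv (f : ℝ × ℝ × ℝ → ℝ) (p : ℝ × ℝ × ℝ) : ℝ :=
  p.1 / 2 * px f p + p.2.1 / 2 * py f p + p.2.2 * pz f p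
/-- sub-Laplacian Δ_H = X² + Y² -/
noncomputable def DeltaH (f : ℝ × ℝ × ℝ → ℝ) (p : ℝ × ℝ × ℝ) : ℝ := Xv (Xv f) p + Yv (Yv f) p
/-- Ornstein–Uhlenbeck operator L = Δ_H − 2D -/
noncomputable def Lop (f : ℝ × ℝ × ℝ → ℝ) (p : ℝ × ℝ × ℝ) : ℝ := DeltaH f p - 2 * Dv f p
/-- carré du champ Γ(f) = (Xf)² + (Yf)² -/
noncomputable def Gam (f : ℝ × ℝ × ℝ → ℝ) (p : ℝ × ℝ × ℝ) : ℝ := (Xv f p) ^ 2 + (Yv f p) ^ 2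
/-- vertical carré du champ Γ^Z(f) = (Zf)² -/
noncomputable def GamZ (f : ℝ × ℝ × ℝ → ℝ) (p : ℝ × ℝ × ℝ) : ℝ := (Zv f p) ^ 2

/-- Γ₂ of the Ornstein–Uhlenbeck operator L on the Heisenberg group. -/
noncomputable def Gam2 (f : ℝ × ℝ × ℝ → ℝ) (p : ℝ × ℝ × ℝ) : ℝ :=
  (1 / 2) * (Lop (Gam f) p - 2 * (Xv f p * Xv (Lop f) p + Yv f p * Yv (Lop f) p))

/-- Γ₂^Z of the Ornstein–Uhlenbeck operator L on the Heisenberg group. -/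
noncomputable def Gam2Z (f : ℝ × ℝ × ℝ → ℝ) (p : ℝ × ℝ × ℝ) : ℝ :=
  (1 / 2) * (Lop (GamZ f) p - 2 * (Zv f p * Zv (Lop f) p))

/-! ### Infrastructure -/

section Infra

variable {f g h : ℝ × ℝ × ℝ → ℝ} {p v w : ℝ × ℝ × ℝ}

lemma contDiff_pd (hf : ContDiff ℝ (⊤ : ℕ∞) f) (v : ℝ × ℝ × ℝ) :
    ContDiff ℝ (⊤ : ℕ∞) (fun q => fderiv ℝ f q v) :=
  (hf.fderiv_right (by simp)).clm_apply contDiff_const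

lemma cd_diff (hg : ContDiff ℝ (⊤ : ℕ∞) g) (p : ℝ × ℝ × ℝ) : DifferentiableAt ℝ g p :=
  (hg.differentiable (by simp)).differentiableAt

lemma pd_symm (hf : ContDiff ℝ (⊤ : ℕ∞) f) (v w : ℝ × ℝ × ℝ) :
    fderiv ℝ (fun q => fderiv ℝ f q v) p w = fderiv ℝ (fun q => fderiv ℝ f q w) p v := by
  have hd : DifferentiableAt ℝ (fderiv ℝ f) p :=
    ((hf.fderiv_right (m := 1) (WithTop.coe_le_coe.mpr le_top)).differentiable one_ne_zero).differentiableAt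
  have h1 : ∀ u : ℝ × ℝ × ℝ, fderiv ℝ (fun q => fderiv ℝ f q u) p
      = (fderiv ℝ (fderiv ℝ f) p).flip u := by
    intro u
    have h := fderiv_clm_apply (c := fderiv ℝ f) (u := fun _ => u) hd (differentiableAt_const _)
    simpa using h
  rw [h1 v, h1 w]
  exact (hf.contDiffAt.isSymmSndFDerivAt (by simpa using (WithTop.coe_le_coe.mpr le_top : ((2 : ℕ∞) : WithTop ℕ∞) ≤ ((⊤ : ℕ∞) : WithTop ℕ∞)))) w v

lemma pd_add (hg : DifferentiableAt ℝ g p) (hh : DifferentiableAt ℝ h p) :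
    fderiv ℝ (fun q => g q + h q) p v = fderiv ℝ g p v + fderiv ℝ h p v := by
  rw [fderiv_fun_add hg hh]; rfl

lemma pd_sub (hg : DifferentiableAt ℝ g p) (hh : DifferentiableAt ℝ h p) :
    fderiv ℝ (fun q => g q - h q) p v = fderiv ℝ g p v - fderiv ℝ h p v := by
  rw [fderiv_fun_sub hg hh]; rfl

lemma pd_mul (hg : DifferentiableAt ℝ g p) (hh : DifferentiableAt ℝ h p) :
    fderiv ℝ (fun q => g q * h q) p v = fderiv ℝ g p v * h p + g p * fderiv ℝ h p v := by
  rw [fderiv_fun_mul hg hh]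
  simp [ContinuousLinearMap.add_apply, ContinuousLinearMap.smul_apply, smul_eq_mul]
  ring

lemma pd_const_mul (k : ℝ) (hh : DifferentiableAt ℝ h p) :
    fderiv ℝ (fun q => k * h q) p v = k * fderiv ℝ h p v := by
  rw [fderiv_const_mul hh]; rfl

lemma pd_sq (hg : DifferentiableAt ℝ g p) :
    fderiv ℝ (fun q => g q ^ 2) p v = 2 * g p * fderiv ℝ g p v := by
  rw [show (fun q => g q ^ 2) = fun q => g q * g q from funext fun q => by ring, pd_mul hg hg]
  ring

lemma pd_snd1 : fderiv ℝ (fun q : ℝ × ℝ × ℝ => q.2.1) p v = v.2.1 := by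
  have h : HasFDerivAt (fun q : ℝ × ℝ × ℝ => q.2.1)
      ((ContinuousLinearMap.fst ℝ ℝ ℝ).comp (ContinuousLinearMap.snd ℝ ℝ (ℝ × ℝ))) p :=
    hasFDerivAt_fst.comp p hasFDerivAt_snd
  rw [h.fderiv]; rfl

lemma pd_snd2 : fderiv ℝ (fun q : ℝ × ℝ × ℝ => q.2.2) p v = v.2.2 := by
  have h : HasFDerivAt (fun q : ℝ × ℝ × ℝ => q.2.2)
      ((ContinuousLinearMap.snd ℝ ℝ ℝ).comp (ContinuousLinearMap.snd ℝ ℝ (ℝ × ℝ))) p :=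
    hasFDerivAt_snd.comp p hasFDerivAt_snd
  rw [h.fderiv]; rfl

lemma pd_fst_half : fderiv ℝ (fun q : ℝ × ℝ × ℝ => q.1 / 2) p v = v.1 / 2 := by
  have h : (fun q : ℝ × ℝ × ℝ => q.1 / 2) = fun q : ℝ × ℝ × ℝ => (1/2 : ℝ) * q.1 :=
    funext fun q => by ring
  rw [h, fderiv_const_mul differentiableAt_fst]
  simp [fderiv_fst]
  ring

lemma pd_snd1_half : fderiv ℝ (fun q : ℝ × ℝ × ℝ => q.2.1 / 2) p v = v.2.1 / 2 := by
  have h : (fun q : ℝ × ℝ × ℝ => q.2.1 / 2) = fun q : ℝ × ℝ × ℝ => (1/2 : ℝ) * q.2.1 :=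
    funext fun q => by ring
  rw [h, fderiv_const_mul differentiableAt_snd.fst, ContinuousLinearMap.smul_apply, pd_snd1]
  simp [smul_eq_mul]
  ring

lemma diff_fst_half : DifferentiableAt ℝ (fun q : ℝ × ℝ × ℝ => q.1 / 2) p :=
  (((contDiff_fst (𝕜 := ℝ)).div_const 2).differentiable one_ne_zero).differentiableAt

lemma diff_snd1_half : DifferentiableAt ℝ (fun q : ℝ × ℝ × ℝ => q.2.1 / 2) p :=
  (((contDiff_snd.fst (𝕜 := ℝ)).div_const 2).differentiable one_ne_zero).differentiableAt

lemma diff_snd2 : DifferentiableAt ℝ (fun q : ℝ × ℝ × ℝ => q.2.2) p :=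
  differentiableAt_snd.snd

/-! smoothness of the vector fields -/

lemma smooth_Xv (hf : ContDiff ℝ (⊤ : ℕ∞) f) : ContDiff ℝ (⊤ : ℕ∞) (Xv f) :=
  (contDiff_pd hf (1, 0, 0)).sub
    (((contDiff_snd.fst).div_const 2).mul (contDiff_pd hf (0, 0, 1)))

lemma smooth_Yv (hf : ContDiff ℝ (⊤ : ℕ∞) f) : ContDiff ℝ (⊤ : ℕ∞) (Yv f) :=
  (contDiff_pd hf (0, 1, 0)).add
    (((contDiff_fst).div_const 2).mul (contDiff_pd hf (0, 0, 1)))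

lemma smooth_Zv (hf : ContDiff ℝ (⊤ : ℕ∞) f) : ContDiff ℝ (⊤ : ℕ∞) (Zv f) :=
  contDiff_pd hf (0, 0, 1)

lemma smooth_Dv (hf : ContDiff ℝ (⊤ : ℕ∞) f) : ContDiff ℝ (⊤ : ℕ∞) (Dv f) :=
  ((((contDiff_fst).div_const 2).mul (contDiff_pd hf (1, 0, 0))).add
    (((contDiff_snd.fst).div_const 2).mul (contDiff_pd hf (0, 1, 0)))).add
    ((contDiff_snd.snd).mul (contDiff_pd hf (0, 0, 1)))

end Infra

section Leibniz
variable {g h : ℝ × ℝ × ℝ → ℝ} {p : ℝ × ℝ × ℝ}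

lemma Xv_add (hg : DifferentiableAt ℝ g p) (hh : DifferentiableAt ℝ h p) :
    Xv (fun q => g q + h q) p = Xv g p + Xv h p := by
  simp only [Xv, px, pz, pd_add hg hh]; ring

lemma Xv_sub (hg : DifferentiableAt ℝ g p) (hh : DifferentiableAt ℝ h p) :
    Xv (fun q => g q - h q) p = Xv g p - Xv h p := by
  simp only [Xv, px, pz, pd_sub hg hh]; ring

lemma Xv_const_mul (k : ℝ) (hh : DifferentiableAt ℝ h p) :
    Xv (fun q => k * h q) p = k * Xv h p := by
  simp only [Xv, px, pz, pd_const_mul k hh]; ring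

lemma Xv_mul (hg : DifferentiableAt ℝ g p) (hh : DifferentiableAt ℝ h p) :
    Xv (fun q => g q * h q) p = Xv g p * h p + g p * Xv h p := by
  simp only [Xv, px, pz, pd_mul hg hh]; ring

lemma Xv_sq (hg : DifferentiableAt ℝ g p) :
    Xv (fun q => g q ^ 2) p = 2 * (g p * Xv g p) := by
  simp only [Xv, px, pz, pd_sq hg]; ring

lemma Yv_add (hg : DifferentiableAt ℝ g p) (hh : DifferentiableAt ℝ h p) :
    Yv (fun q => g q + h q) p = Yv g p + Yv h p := by
  simp only [Yv, py, pz, pd_add hg hh]; ring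

lemma Yv_sub (hg : DifferentiableAt ℝ g p) (hh : DifferentiableAt ℝ h p) :
    Yv (fun q => g q - h q) p = Yv g p - Yv h p := by
  simp only [Yv, py, pz, pd_sub hg hh]; ring

lemma Yv_const_mul (k : ℝ) (hh : DifferentiableAt ℝ h p) :
    Yv (fun q => k * h q) p = k * Yv h p := by
  simp only [Yv, py, pz, pd_const_mul k hh]; ring

lemma Yv_mul (hg : DifferentiableAt ℝ g p) (hh : DifferentiableAt ℝ h p) :
    Yv (fun q => g q * h q) p = Yv g p * h p + g p * Yv h p := by
  simp only [Yv, py, pz, pd_mul hg hh]; ring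

lemma Yv_sq (hg : DifferentiableAt ℝ g p) :
    Yv (fun q => g q ^ 2) p = 2 * (g p * Yv g p) := by
  simp only [Yv, py, pz, pd_sq hg]; ring

lemma Zv_add (hg : DifferentiableAt ℝ g p) (hh : DifferentiableAt ℝ h p) :
    Zv (fun q => g q + h q) p = Zv g p + Zv h p := by
  simp only [Zv, pz, pd_add hg hh]

lemma Zv_sub (hg : DifferentiableAt ℝ g p) (hh : DifferentiableAt ℝ h p) :
    Zv (fun q => g q - h q) p = Zv g p - Zv h p := by
  simp only [Zv, pz, pd_sub hg hh]

lemma Zv_const_mul (k : ℝ) (hh : DifferentiableAt ℝ h p) :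
    Zv (fun q => k * h q) p = k * Zv h p := by
  simp only [Zv, pz, pd_const_mul k hh]

lemma Dv_add (hg : DifferentiableAt ℝ g p) (hh : DifferentiableAt ℝ h p) :
    Dv (fun q => g q + h q) p = Dv g p + Dv h p := by
  simp only [Dv, px, py, pz, pd_add hg hh]; ring

lemma Dv_sq (hg : DifferentiableAt ℝ g p) :
    Dv (fun q => g q ^ 2) p = 2 * (g p * Dv g p) := by
  simp only [Dv, px, py, pz, pd_sq hg]; ring

end Leibniz

section Comm
variable {f : ℝ × ℝ × ℝ → ℝ}

lemma I1 (hf : ContDiff ℝ (⊤ : ℕ∞) f) (p : ℝ × ℝ × ℝ) : Xv (Yv f) p = Yv (Xv f) p + Zv f p := by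
  have d1 : DifferentiableAt ℝ (fun q => fderiv ℝ f q (1, 0, 0)) p := cd_diff (contDiff_pd hf _) p
  have d2 : DifferentiableAt ℝ (fun q => fderiv ℝ f q (0, 1, 0)) p := cd_diff (contDiff_pd hf _) p
  have d3 : DifferentiableAt ℝ (fun q => fderiv ℝ f q (0, 0, 1)) p := cd_diff (contDiff_pd hf _) p
  have dBx : DifferentiableAt ℝ (fun q : ℝ × ℝ × ℝ => q.2.1 / 2 * fderiv ℝ f q (0, 0, 1)) p :=
    diff_snd1_half.mul d3
  have dBy : DifferentiableAt ℝ (fun q : ℝ × ℝ × ℝ => q.1 / 2 * fderiv ℝ f q (0, 0, 1)) p :=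
    diff_fst_half.mul d3
  have dA1 : DifferentiableAt ℝ (fun q : ℝ × ℝ × ℝ => q.1 / 2 * fderiv ℝ f q (1, 0, 0)) p :=
    diff_fst_half.mul d1
  have dA2 : DifferentiableAt ℝ (fun q : ℝ × ℝ × ℝ => q.2.1 / 2 * fderiv ℝ f q (0, 1, 0)) p :=
    diff_snd1_half.mul d2
  have dA := dA1.add dA2
  have dC : DifferentiableAt ℝ (fun q : ℝ × ℝ × ℝ => q.2.2 * fderiv ℝ f q (0, 0, 1)) p :=
    diff_snd2.mul d3
  have hXf : Xv f = fun q => fderiv ℝ f q (1, 0, 0) - q.2.1 / 2 * fderiv ℝ f q (0, 0, 1) := rfl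
  have hYf : Yv f = fun q => fderiv ℝ f q (0, 1, 0) + q.1 / 2 * fderiv ℝ f q (0, 0, 1) := rfl
  have hZf : Zv f = fun q => fderiv ℝ f q (0, 0, 1) := rfl
  have hDf : Dv f = fun q => q.1 / 2 * fderiv ℝ f q (1, 0, 0) + q.2.1 / 2 * fderiv ℝ f q (0, 1, 0)
      + q.2.2 * fderiv ℝ f q (0, 0, 1) := rfl
  simp only [Xv, Yv, Zv, Dv, px, py, pz]
  try rw [hXf]
  try rw [hYf]
  try rw [hZf]
  try rw [hDf]
  simp only [pd_add d2 dBy, pd_sub d1 dBx, pd_add dA dC, pd_add dA1 dA2,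
    pd_mul diff_fst_half d3, pd_mul diff_snd1_half d3, pd_mul diff_fst_half d1,
    pd_mul diff_snd1_half d2, pd_mul diff_snd2 d3, pd_fst_half, pd_snd1_half, pd_snd2]
  norm_num [-Prod.mk_zero_zero]
  all_goals try rw [pd_symm hf (0, 1, 0) (1, 0, 0)]
  all_goals try rw [pd_symm hf (0, 0, 1) (1, 0, 0)]
  all_goals try rw [pd_symm hf (0, 0, 1) (0, 1, 0)]
  all_goals ring

lemma I2 (hf : ContDiff ℝ (⊤ : ℕ∞) f) (p : ℝ × ℝ × ℝ) : Zv (Xv f) p = Xv (Zv f) p := by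
  have d1 : DifferentiableAt ℝ (fun q => fderiv ℝ f q (1, 0, 0)) p := cd_diff (contDiff_pd hf _) p
  have d2 : DifferentiableAt ℝ (fun q => fderiv ℝ f q (0, 1, 0)) p := cd_diff (contDiff_pd hf _) p
  have d3 : DifferentiableAt ℝ (fun q => fderiv ℝ f q (0, 0, 1)) p := cd_diff (contDiff_pd hf _) p
  have dBx : DifferentiableAt ℝ (fun q : ℝ × ℝ × ℝ => q.2.1 / 2 * fderiv ℝ f q (0, 0, 1)) p :=
    diff_snd1_half.mul d3
  have dBy : DifferentiableAt ℝ (fun q : ℝ × ℝ × ℝ => q.1 / 2 * fderiv ℝ f q (0, 0, 1)) p :=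
    diff_fst_half.mul d3
  have dA1 : DifferentiableAt ℝ (fun q : ℝ × ℝ × ℝ => q.1 / 2 * fderiv ℝ f q (1, 0, 0)) p :=
    diff_fst_half.mul d1
  have dA2 : DifferentiableAt ℝ (fun q : ℝ × ℝ × ℝ => q.2.1 / 2 * fderiv ℝ f q (0, 1, 0)) p :=
    diff_snd1_half.mul d2
  have dA := dA1.add dA2
  have dC : DifferentiableAt ℝ (fun q : ℝ × ℝ × ℝ => q.2.2 * fderiv ℝ f q (0, 0, 1)) p :=
    diff_snd2.mul d3
  have hXf : Xv f = fun q => fderiv ℝ f q (1, 0, 0) - q.2.1 / 2 * fderiv ℝ f q (0, 0, 1) := rfl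
  have hYf : Yv f = fun q => fderiv ℝ f q (0, 1, 0) + q.1 / 2 * fderiv ℝ f q (0, 0, 1) := rfl
  have hZf : Zv f = fun q => fderiv ℝ f q (0, 0, 1) := rfl
  have hDf : Dv f = fun q => q.1 / 2 * fderiv ℝ f q (1, 0, 0) + q.2.1 / 2 * fderiv ℝ f q (0, 1, 0)
      + q.2.2 * fderiv ℝ f q (0, 0, 1) := rfl
  simp only [Xv, Yv, Zv, Dv, px, py, pz]
  try rw [hXf]
  try rw [hYf]
  try rw [hZf]
  try rw [hDf]
  simp only [pd_add d2 dBy, pd_sub d1 dBx, pd_add dA dC, pd_add dA1 dA2,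
    pd_mul diff_fst_half d3, pd_mul diff_snd1_half d3, pd_mul diff_fst_half d1,
    pd_mul diff_snd1_half d2, pd_mul diff_snd2 d3, pd_fst_half, pd_snd1_half, pd_snd2]
  norm_num [-Prod.mk_zero_zero]
  all_goals try rw [pd_symm hf (0, 1, 0) (1, 0, 0)]
  all_goals try rw [pd_symm hf (0, 0, 1) (1, 0, 0)]
  all_goals try rw [pd_symm hf (0, 0, 1) (0, 1, 0)]
  all_goals ring

lemma I3 (hf : ContDiff ℝ (⊤ : ℕ∞) f) (p : ℝ × ℝ × ℝ) : Zv (Yv f) p = Yv (Zv f) p := by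
  have d1 : DifferentiableAt ℝ (fun q => fderiv ℝ f q (1, 0, 0)) p := cd_diff (contDiff_pd hf _) p
  have d2 : DifferentiableAt ℝ (fun q => fderiv ℝ f q (0, 1, 0)) p := cd_diff (contDiff_pd hf _) p
  have d3 : DifferentiableAt ℝ (fun q => fderiv ℝ f q (0, 0, 1)) p := cd_diff (contDiff_pd hf _) p
  have dBx : DifferentiableAt ℝ (fun q : ℝ × ℝ × ℝ => q.2.1 / 2 * fderiv ℝ f q (0, 0, 1)) p :=
    diff_snd1_half.mul d3
  have dBy : DifferentiableAt ℝ (fun q : ℝ × ℝ × ℝ => q.1 / 2 * fderiv ℝ f q (0, 0, 1)) p :=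
    diff_fst_half.mul d3
  have dA1 : DifferentiableAt ℝ (fun q : ℝ × ℝ × ℝ => q.1 / 2 * fderiv ℝ f q (1, 0, 0)) p :=
    diff_fst_half.mul d1
  have dA2 : DifferentiableAt ℝ (fun q : ℝ × ℝ × ℝ => q.2.1 / 2 * fderiv ℝ f q (0, 1, 0)) p :=
    diff_snd1_half.mul d2
  have dA := dA1.add dA2
  have dC : DifferentiableAt ℝ (fun q : ℝ × ℝ × ℝ => q.2.2 * fderiv ℝ f q (0, 0, 1)) p :=
    diff_snd2.mul d3
  have hXf : Xv f = fun q => fderiv ℝ f q (1, 0, 0) - q.2.1 / 2 * fderiv ℝ f q (0, 0, 1) := rfl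
  have hYf : Yv f = fun q => fderiv ℝ f q (0, 1, 0) + q.1 / 2 * fderiv ℝ f q (0, 0, 1) := rfl
  have hZf : Zv f = fun q => fderiv ℝ f q (0, 0, 1) := rfl
  have hDf : Dv f = fun q => q.1 / 2 * fderiv ℝ f q (1, 0, 0) + q.2.1 / 2 * fderiv ℝ f q (0, 1, 0)
      + q.2.2 * fderiv ℝ f q (0, 0, 1) := rfl
  simp only [Xv, Yv, Zv, Dv, px, py, pz]
  try rw [hXf]
  try rw [hYf]
  try rw [hZf]
  try rw [hDf]
  simp only [pd_add d2 dBy, pd_sub d1 dBx, pd_add dA dC, pd_add dA1 dA2,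
    pd_mul diff_fst_half d3, pd_mul diff_snd1_half d3, pd_mul diff_fst_half d1,
    pd_mul diff_snd1_half d2, pd_mul diff_snd2 d3, pd_fst_half, pd_snd1_half, pd_snd2]
  norm_num [-Prod.mk_zero_zero]
  all_goals try rw [pd_symm hf (0, 1, 0) (1, 0, 0)]
  all_goals try rw [pd_symm hf (0, 0, 1) (1, 0, 0)]
  all_goals try rw [pd_symm hf (0, 0, 1) (0, 1, 0)]
  all_goals ring

lemma I4 (hf : ContDiff ℝ (⊤ : ℕ∞) f) (p : ℝ × ℝ × ℝ) : Xv (Dv f) p = 1 / 2 * Xv f p + Dv (Xv f) p := by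
  have d1 : DifferentiableAt ℝ (fun q => fderiv ℝ f q (1, 0, 0)) p := cd_diff (contDiff_pd hf _) p
  have d2 : DifferentiableAt ℝ (fun q => fderiv ℝ f q (0, 1, 0)) p := cd_diff (contDiff_pd hf _) p
  have d3 : DifferentiableAt ℝ (fun q => fderiv ℝ f q (0, 0, 1)) p := cd_diff (contDiff_pd hf _) p
  have dBx : DifferentiableAt ℝ (fun q : ℝ × ℝ × ℝ => q.2.1 / 2 * fderiv ℝ f q (0, 0, 1)) p :=
    diff_snd1_half.mul d3
  have dBy : DifferentiableAt ℝ (fun q : ℝ × ℝ × ℝ => q.1 / 2 * fderiv ℝ f q (0, 0, 1)) p :=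
    diff_fst_half.mul d3
  have dA1 : DifferentiableAt ℝ (fun q : ℝ × ℝ × ℝ => q.1 / 2 * fderiv ℝ f q (1, 0, 0)) p :=
    diff_fst_half.mul d1
  have dA2 : DifferentiableAt ℝ (fun q : ℝ × ℝ × ℝ => q.2.1 / 2 * fderiv ℝ f q (0, 1, 0)) p :=
    diff_snd1_half.mul d2
  have dA : DifferentiableAt ℝ (fun q : ℝ × ℝ × ℝ => q.1 / 2 * fderiv ℝ f q (1, 0, 0)
        + q.2.1 / 2 * fderiv ℝ f q (0, 1, 0)) p := dA1.add dA2
  have dC : DifferentiableAt ℝ (fun q : ℝ × ℝ × ℝ => q.2.2 * fderiv ℝ f q (0, 0, 1)) p :=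
    diff_snd2.mul d3
  have hXf : Xv f = fun q => fderiv ℝ f q (1, 0, 0) - q.2.1 / 2 * fderiv ℝ f q (0, 0, 1) := rfl
  have hYf : Yv f = fun q => fderiv ℝ f q (0, 1, 0) + q.1 / 2 * fderiv ℝ f q (0, 0, 1) := rfl
  have hZf : Zv f = fun q => fderiv ℝ f q (0, 0, 1) := rfl
  have hDf : Dv f = fun q => q.1 / 2 * fderiv ℝ f q (1, 0, 0) + q.2.1 / 2 * fderiv ℝ f q (0, 1, 0)
      + q.2.2 * fderiv ℝ f q (0, 0, 1) := rfl
  simp only [Xv, Yv, Zv, Dv, px, py, pz]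
  try rw [hXf]
  try rw [hYf]
  try rw [hZf]
  try rw [hDf]
  simp only [pd_add d2 dBy, pd_sub d1 dBx, pd_add dA dC, pd_add dA1 dA2,
    pd_mul diff_fst_half d3, pd_mul diff_snd1_half d3, pd_mul diff_fst_half d1,
    pd_mul diff_snd1_half d2, pd_mul diff_snd2 d3, pd_fst_half, pd_snd1_half, pd_snd2]
  norm_num [-Prod.mk_zero_zero]
  all_goals try rw [pd_symm hf (0, 1, 0) (1, 0, 0)]
  all_goals try rw [pd_symm hf (0, 0, 1) (1, 0, 0)]
  all_goals try rw [pd_symm hf (0, 0, 1) (0, 1, 0)]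
  all_goals ring

lemma I5 (hf : ContDiff ℝ (⊤ : ℕ∞) f) (p : ℝ × ℝ × ℝ) : Yv (Dv f) p = 1 / 2 * Yv f p + Dv (Yv f) p := by
  have d1 : DifferentiableAt ℝ (fun q => fderiv ℝ f q (1, 0, 0)) p := cd_diff (contDiff_pd hf _) p
  have d2 : DifferentiableAt ℝ (fun q => fderiv ℝ f q (0, 1, 0)) p := cd_diff (contDiff_pd hf _) p
  have d3 : DifferentiableAt ℝ (fun q => fderiv ℝ f q (0, 0, 1)) p := cd_diff (contDiff_pd hf _) p
  have dBx : DifferentiableAt ℝ (fun q : ℝ × ℝ × ℝ => q.2.1 / 2 * fderiv ℝ f q (0, 0, 1)) p :=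
    diff_snd1_half.mul d3
  have dBy : DifferentiableAt ℝ (fun q : ℝ × ℝ × ℝ => q.1 / 2 * fderiv ℝ f q (0, 0, 1)) p :=
    diff_fst_half.mul d3
  have dA1 : DifferentiableAt ℝ (fun q : ℝ × ℝ × ℝ => q.1 / 2 * fderiv ℝ f q (1, 0, 0)) p :=
    diff_fst_half.mul d1
  have dA2 : DifferentiableAt ℝ (fun q : ℝ × ℝ × ℝ => q.2.1 / 2 * fderiv ℝ f q (0, 1, 0)) p :=
    diff_snd1_half.mul d2
  have dA : DifferentiableAt ℝ (fun q : ℝ × ℝ × ℝ => q.1 / 2 * fderiv ℝ f q (1, 0, 0)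
        + q.2.1 / 2 * fderiv ℝ f q (0, 1, 0)) p := dA1.add dA2
  have dC : DifferentiableAt ℝ (fun q : ℝ × ℝ × ℝ => q.2.2 * fderiv ℝ f q (0, 0, 1)) p :=
    diff_snd2.mul d3
  have hXf : Xv f = fun q => fderiv ℝ f q (1, 0, 0) - q.2.1 / 2 * fderiv ℝ f q (0, 0, 1) := rfl
  have hYf : Yv f = fun q => fderiv ℝ f q (0, 1, 0) + q.1 / 2 * fderiv ℝ f q (0, 0, 1) := rfl
  have hZf : Zv f = fun q => fderiv ℝ f q (0, 0, 1) := rfl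
  have hDf : Dv f = fun q => q.1 / 2 * fderiv ℝ f q (1, 0, 0) + q.2.1 / 2 * fderiv ℝ f q (0, 1, 0)
      + q.2.2 * fderiv ℝ f q (0, 0, 1) := rfl
  simp only [Xv, Yv, Zv, Dv, px, py, pz]
  try rw [hXf]
  try rw [hYf]
  try rw [hZf]
  try rw [hDf]
  simp only [pd_add d2 dBy, pd_sub d1 dBx, pd_add dA dC, pd_add dA1 dA2,
    pd_mul diff_fst_half d3, pd_mul diff_snd1_half d3, pd_mul diff_fst_half d1,
    pd_mul diff_snd1_half d2, pd_mul diff_snd2 d3, pd_fst_half, pd_snd1_half, pd_snd2]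
  norm_num [-Prod.mk_zero_zero]
  all_goals try rw [pd_symm hf (0, 1, 0) (1, 0, 0)]
  all_goals try rw [pd_symm hf (0, 0, 1) (1, 0, 0)]
  all_goals try rw [pd_symm hf (0, 0, 1) (0, 1, 0)]
  all_goals ring

lemma I6 (hf : ContDiff ℝ (⊤ : ℕ∞) f) (p : ℝ × ℝ × ℝ) : Zv (Dv f) p = Zv f p + Dv (Zv f) p := by
  have d1 : DifferentiableAt ℝ (fun q => fderiv ℝ f q (1, 0, 0)) p := cd_diff (contDiff_pd hf _) p
  have d2 : DifferentiableAt ℝ (fun q => fderiv ℝ f q (0, 1, 0)) p := cd_diff (contDiff_pd hf _) p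
  have d3 : DifferentiableAt ℝ (fun q => fderiv ℝ f q (0, 0, 1)) p := cd_diff (contDiff_pd hf _) p
  have dBx : DifferentiableAt ℝ (fun q : ℝ × ℝ × ℝ => q.2.1 / 2 * fderiv ℝ f q (0, 0, 1)) p :=
    diff_snd1_half.mul d3
  have dBy : DifferentiableAt ℝ (fun q : ℝ × ℝ × ℝ => q.1 / 2 * fderiv ℝ f q (0, 0, 1)) p :=
    diff_fst_half.mul d3
  have dA1 : DifferentiableAt ℝ (fun q : ℝ × ℝ × ℝ => q.1 / 2 * fderiv ℝ f q (1, 0, 0)) p :=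
    diff_fst_half.mul d1
  have dA2 : DifferentiableAt ℝ (fun q : ℝ × ℝ × ℝ => q.2.1 / 2 * fderiv ℝ f q (0, 1, 0)) p :=
    diff_snd1_half.mul d2
  have dA : DifferentiableAt ℝ (fun q : ℝ × ℝ × ℝ => q.1 / 2 * fderiv ℝ f q (1, 0, 0)
        + q.2.1 / 2 * fderiv ℝ f q (0, 1, 0)) p := dA1.add dA2
  have dC : DifferentiableAt ℝ (fun q : ℝ × ℝ × ℝ => q.2.2 * fderiv ℝ f q (0, 0, 1)) p :=
    diff_snd2.mul d3
  have hXf : Xv f = fun q => fderiv ℝ f q (1, 0, 0) - q.2.1 / 2 * fderiv ℝ f q (0, 0, 1) := rfl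
  have hYf : Yv f = fun q => fderiv ℝ f q (0, 1, 0) + q.1 / 2 * fderiv ℝ f q (0, 0, 1) := rfl
  have hZf : Zv f = fun q => fderiv ℝ f q (0, 0, 1) := rfl
  have hDf : Dv f = fun q => q.1 / 2 * fderiv ℝ f q (1, 0, 0) + q.2.1 / 2 * fderiv ℝ f q (0, 1, 0)
      + q.2.2 * fderiv ℝ f q (0, 0, 1) := rfl
  simp only [Xv, Yv, Zv, Dv, px, py, pz]
  try rw [hXf]
  try rw [hYf]
  try rw [hZf]
  try rw [hDf]
  simp only [pd_add d2 dBy, pd_sub d1 dBx, pd_add dA dC, pd_add dA1 dA2,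
    pd_mul diff_fst_half d3, pd_mul diff_snd1_half d3, pd_mul diff_fst_half d1,
    pd_mul diff_snd1_half d2, pd_mul diff_snd2 d3, pd_fst_half, pd_snd1_half, pd_snd2]
  norm_num [-Prod.mk_zero_zero]
  all_goals try rw [pd_symm hf (0, 1, 0) (1, 0, 0)]
  all_goals try rw [pd_symm hf (0, 0, 1) (1, 0, 0)]
  all_goals try rw [pd_symm hf (0, 0, 1) (0, 1, 0)]
  all_goals ring

end Comm

section Main

variable {f g h : ℝ × ℝ × ℝ → ℝ}

lemma Lop_unfold (g : ℝ × ℝ × ℝ → ℝ) (p : ℝ × ℝ × ℝ) :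
    Lop g p = Xv (Xv g) p + Yv (Yv g) p - 2 * Dv g p := rfl

lemma Lop_add (hg : ContDiff ℝ (⊤ : ℕ∞) g) (hh : ContDiff ℝ (⊤ : ℕ∞) h) (p : ℝ × ℝ × ℝ) :
    Lop (fun q => g q + h q) p = Lop g p + Lop h p := by
  have hX : Xv (fun q => g q + h q) = fun q => Xv g q + Xv h q :=
    funext fun q => Xv_add (cd_diff hg q) (cd_diff hh q)
  have hY : Yv (fun q => g q + h q) = fun q => Yv g q + Yv h q :=
    funext fun q => Yv_add (cd_diff hg q) (cd_diff hh q)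
  rw [Lop_unfold, Lop_unfold g p, Lop_unfold h p, hX, hY,
    Xv_add (cd_diff (smooth_Xv hg) p) (cd_diff (smooth_Xv hh) p),
    Yv_add (cd_diff (smooth_Yv hg) p) (cd_diff (smooth_Yv hh) p),
    Dv_add (cd_diff hg p) (cd_diff hh p)]
  ring

lemma Lsq (hg : ContDiff ℝ (⊤ : ℕ∞) g) (p : ℝ × ℝ × ℝ) :
    Lop (fun q => g q ^ 2) p = 2 * ((Xv g p) ^ 2 + (Yv g p) ^ 2) + 2 * g p * Lop g p := by
  have hX : Xv (fun q => g q ^ 2) = fun q => 2 * (g q * Xv g q) :=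
    funext fun q => Xv_sq (cd_diff hg q)
  have hY : Yv (fun q => g q ^ 2) = fun q => 2 * (g q * Yv g q) :=
    funext fun q => Yv_sq (cd_diff hg q)
  have dg := cd_diff hg p
  have dXg := cd_diff (smooth_Xv hg) p
  have dYg := cd_diff (smooth_Yv hg) p
  have dgXg : DifferentiableAt ℝ (fun q => g q * Xv g q) p := dg.mul dXg
  have dgYg : DifferentiableAt ℝ (fun q => g q * Yv g q) p := dg.mul dYg
  rw [Lop_unfold, Lop_unfold g p, hX, hY, Xv_const_mul 2 dgXg, Yv_const_mul 2 dgYg,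
    Xv_mul dg dXg, Yv_mul dg dYg, Dv_sq dg]
  ring

lemma K1 (hf : ContDiff ℝ (⊤ : ℕ∞) f) (p : ℝ × ℝ × ℝ) :
    Xv (Lop f) p = Lop (Xv f) p + 2 * Yv (Zv f) p - Xv f p := by
  have ha := smooth_Xv hf
  have hb := smooth_Yv hf
  have hc := smooth_Zv hf
  have hLf : Lop f = fun q => Xv (Xv f) q + Yv (Yv f) q - 2 * Dv f q := rfl
  have FI1 : Xv (Yv f) = fun q => Yv (Xv f) q + Zv f q := funext fun q => I1 hf q
  have dsum : DifferentiableAt ℝ (fun q => Xv (Xv f) q + Yv (Yv f) q) p :=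
    (cd_diff (smooth_Xv ha) p).add (cd_diff (smooth_Yv hb) p)
  have d2D : DifferentiableAt ℝ (fun q => 2 * Dv f q) p :=
    (cd_diff (smooth_Dv hf) p).const_mul 2
  rw [hLf, Xv_sub dsum d2D,
    Xv_add (cd_diff (smooth_Xv ha) p) (cd_diff (smooth_Yv hb) p),
    Xv_const_mul 2 (cd_diff (smooth_Dv hf) p), I4 hf p, I1 hb p, I3 hf p, FI1,
    Yv_add (cd_diff (smooth_Yv ha) p) (cd_diff hc p), Lop_unfold (Xv f) p]
  ring

lemma K2 (hf : ContDiff ℝ (⊤ : ℕ∞) f) (p : ℝ × ℝ × ℝ) :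
    Yv (Lop f) p = Lop (Yv f) p - 2 * Xv (Zv f) p - Yv f p := by
  have ha := smooth_Xv hf
  have hb := smooth_Yv hf
  have hc := smooth_Zv hf
  have hLf : Lop f = fun q => Xv (Xv f) q + Yv (Yv f) q - 2 * Dv f q := rfl
  have FI1' : Yv (Xv f) = fun q => Xv (Yv f) q - Zv f q :=
    funext fun q => by have := I1 hf q; linarith
  have dsum : DifferentiableAt ℝ (fun q => Xv (Xv f) q + Yv (Yv f) q) p :=
    (cd_diff (smooth_Xv ha) p).add (cd_diff (smooth_Yv hb) p)
  have d2D : DifferentiableAt ℝ (fun q => 2 * Dv f q) p :=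
    (cd_diff (smooth_Dv hf) p).const_mul 2
  have hswap : Yv (Xv (Xv f)) p = Xv (Yv (Xv f)) p - Zv (Xv f) p := by
    have := I1 ha p; linarith
  rw [hLf, Yv_sub dsum d2D,
    Yv_add (cd_diff (smooth_Xv ha) p) (cd_diff (smooth_Yv hb) p),
    Yv_const_mul 2 (cd_diff (smooth_Dv hf) p), I5 hf p, hswap, FI1',
    Xv_sub (cd_diff (smooth_Xv hb) p) (cd_diff hc p), I2 hf p, Lop_unfold (Yv f) p]
  ring

lemma K3 (hf : ContDiff ℝ (⊤ : ℕ∞) f) (p : ℝ × ℝ × ℝ) :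
    Zv (Lop f) p = Lop (Zv f) p - 2 * Zv f p := by
  have ha := smooth_Xv hf
  have hb := smooth_Yv hf
  have hLf : Lop f = fun q => Xv (Xv f) q + Yv (Yv f) q - 2 * Dv f q := rfl
  have FI2 : Zv (Xv f) = Xv (Zv f) := funext fun q => I2 hf q
  have FI3 : Zv (Yv f) = Yv (Zv f) := funext fun q => I3 hf q
  have dsum : DifferentiableAt ℝ (fun q => Xv (Xv f) q + Yv (Yv f) q) p :=
    (cd_diff (smooth_Xv ha) p).add (cd_diff (smooth_Yv hb) p)
  have d2D : DifferentiableAt ℝ (fun q => 2 * Dv f q) p :=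
    (cd_diff (smooth_Dv hf) p).const_mul 2
  rw [hLf, Zv_sub dsum d2D,
    Zv_add (cd_diff (smooth_Xv ha) p) (cd_diff (smooth_Yv hb) p),
    Zv_const_mul 2 (cd_diff (smooth_Dv hf) p), I6 hf p, I2 ha p, I3 hb p, FI2, FI3,
    Lop_unfold (Zv f) p]
  ring

lemma key_ineq (ε α β γ A B C D2 u v : ℝ) (hε : 0 < ε) (hγ : γ = C - B) :
    (1 - 1 / ε) * (α ^ 2 + β ^ 2) + (2 * ε + 1 / 2) * γ ^ 2 ≤
      A ^ 2 + B ^ 2 + C ^ 2 + D2 ^ 2 - 2 * α * v + 2 * β * u + α ^ 2 + β ^ 2 +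
        ε * (u ^ 2 + v ^ 2 + 2 * γ ^ 2) := by
  rw [← sub_nonneg]
  have hε' : (ε : ℝ) ≠ 0 := ne_of_gt hε
  have key : A ^ 2 + B ^ 2 + C ^ 2 + D2 ^ 2 - 2 * α * v + 2 * β * u + α ^ 2 + β ^ 2 +
        ε * (u ^ 2 + v ^ 2 + 2 * γ ^ 2)
        - ((1 - 1 / ε) * (α ^ 2 + β ^ 2) + (2 * ε + 1 / 2) * γ ^ 2)
      = A ^ 2 + D2 ^ 2 + (B + C) ^ 2 / 2 + (α - ε * v) ^ 2 / ε + (β + ε * u) ^ 2 / ε := by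
    rw [hγ]; field_simp; ring
  rw [key]
  have h1 : 0 ≤ (α - ε * v) ^ 2 / ε := div_nonneg (sq_nonneg _) hε.le
  have h2 : 0 ≤ (β + ε * u) ^ 2 / ε := div_nonneg (sq_nonneg _) hε.le
  have h3 : 0 ≤ (B + C) ^ 2 / 2 := by positivity
  nlinarith [sq_nonneg A, sq_nonneg D2]

end Main

theorem heisenberg_OU_curvature_dimension (f : ℝ × ℝ × ℝ → ℝ) (hf : ContDiff ℝ (⊤ : ℕ∞) f)
    (p : ℝ × ℝ × ℝ) (ε : ℝ) (hε : 0 < ε) :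
    (1 - 1 / ε) * Gam f p + (2 * ε + 1 / 2) * (Zv f p) ^ 2 ≤
      Gam2 f p + ε * Gam2Z f p := by
  have ha := smooth_Xv hf
  have hb := smooth_Yv hf
  have hc := smooth_Zv hf
  have hGam : Gam f = fun q => (Xv f q) ^ 2 + (Yv f q) ^ 2 := rfl
  have hLG : Lop (Gam f) p
      = Lop (fun q => (Xv f q) ^ 2) p + Lop (fun q => (Yv f q) ^ 2) p := by
    rw [hGam]; exact Lop_add (ha.pow 2) (hb.pow 2) p
  have hGam2 : Gam2 f p = (Xv (Xv f) p) ^ 2 + (Yv (Xv f) p) ^ 2 + (Xv (Yv f) p) ^ 2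
      + (Yv (Yv f) p) ^ 2 - 2 * Xv f p * Yv (Zv f) p + 2 * Yv f p * Xv (Zv f) p
      + (Xv f p) ^ 2 + (Yv f p) ^ 2 := by
    have e : Gam2 f p = 1 / 2 * (Lop (Gam f) p
        - 2 * (Xv f p * Xv (Lop f) p + Yv f p * Yv (Lop f) p)) := rfl
    rw [e, hLG, Lsq ha p, Lsq hb p, K1 hf p, K2 hf p]
    ring
  have hGam2Z : Gam2Z f p = (Xv (Zv f) p) ^ 2 + (Yv (Zv f) p) ^ 2 + 2 * (Zv f p) ^ 2 := by
    have e : Gam2Z f p = 1 / 2 * (Lop (GamZ f) p - 2 * (Zv f p * Zv (Lop f) p)) := rfl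
    have eg : GamZ f = fun q => (Zv f q) ^ 2 := rfl
    rw [e, eg, Lsq hc p, K3 hf p]
    ring
  have hrel : Zv f p = Xv (Yv f) p - Yv (Xv f) p := by
    have := I1 hf p; linarith
  have K := key_ineq ε (Xv f p) (Yv f p) (Zv f p) (Xv (Xv f) p) (Yv (Xv f) p)
    (Xv (Yv f) p) (Yv (Yv f) p) (Xv (Zv f) p) (Yv (Zv f) p) hε hrel
  have hGamp : Gam f p = (Xv f p) ^ 2 + (Yv f p) ^ 2 := rfl
  rw [hGamp, hGam2, hGam2Z]
  nlinarith [K]
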